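/- The Fréchet distance d_f(c₀,c₁) := inf_φ sup_u |c₁(φ(u)) − c₀(u)| (infimum over diffeomorphisms φ of S¹) equals the distance d_∞(c₀,c₁) := inf_C ∫₀¹ sup_u |∂_v C(u,v)| dv, where the infimum is over smooth homotopies C with C(·,0) = c₀ and C(·,1) = c₁ ∘ φ for some diffeomorphism φ. -/

import Mathlib

/-!
Both distances are infima over the same reparametrizations `φ`, and each value of one
infimum dominates a value of the other. For the linear interpolation
`C(u,v) = c₀ u + v • (c₁ (φ u) - c₀ u)` the derivative `∂ᵥC(u,v) = c₁ (φ u) - c₀ u` does not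
depend on `v`, so its `L^∞` energy is exactly `sup_u ‖c₁ (φ u) - c₀ u‖`. Conversely, for any
homotopy ending at `c₁ ∘ φ`, the fundamental theorem of calculus gives
`‖c₁ (φ u) - c₀ u‖ ≤ ∫₀¹ ‖∂ᵥC(u,v)‖ dv ≤ ∫₀¹ sup_u ‖∂ᵥC(u,v)‖ dv` for every `u`.
-/

open Real

/-- A lift of an (orientation preserving) diffeomorphism of the circle `ℝ/2πℤ`. -/
def IsDiffeoLift (φ : ℝ → ℝ) : Prop :=
  ContDiff ℝ (⊤ : ℕ∞) φ ∧ StrictMono φ ∧ (∀ u, φ (u + 2 * π) = φ u + 2 * π) ∧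
    ∀ u, deriv φ u ≠ 0

/-- The Fréchet distance `d_f(c₀,c₁) = inf_φ sup_u ‖c₁(φ(u)) - c₀(u)‖`. -/
noncomputable def frechetDist (n : ℕ) (c₀ c₁ : ℝ → EuclideanSpace ℝ (Fin n)) : ℝ :=
  sInf { r : ℝ | ∃ φ : ℝ → ℝ, IsDiffeoLift φ ∧ r = ⨆ u : ℝ, ‖c₁ (φ u) - c₀ u‖ }

/-- The distance induced by the Finsler `L^∞` metric:
`d_∞(c₀,c₁) = inf_C ∫₀¹ sup_u ‖∂ᵥC(u,v)‖ dv` over smooth homotopies `C` from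
`c₀` to some reparametrization `c₁ ∘ φ` of `c₁`. -/
noncomputable def dInfty (n : ℕ) (c₀ c₁ : ℝ → EuclideanSpace ℝ (Fin n)) : ℝ :=
  sInf { r : ℝ |
    ∃ (C : ℝ → ℝ → EuclideanSpace ℝ (Fin n)) (φ : ℝ → ℝ),
      IsDiffeoLift φ ∧
      ContDiff ℝ (⊤ : ℕ∞) (fun p : ℝ × ℝ => C p.1 p.2) ∧
      (∀ u v, C (u + 2 * π) v = C u v) ∧
      (∀ u, C u 0 = c₀ u) ∧ (∀ u, C u 1 = c₁ (φ u)) ∧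
      r = ∫ v in (0:ℝ)..1, ⨆ u : ℝ, ‖deriv (fun v' => C u v') v‖ }

open Function

theorem continuous_iSup_of_periodic {γ α : Type*} [TopologicalSpace γ]
    [ConditionallyCompleteLinearOrder α] [TopologicalSpace α] [OrderTopology α]
    {g : γ → ℝ → α} (hg : Continuous ↿g) {T : ℝ} (hT : T ≠ 0)
    (hper : ∀ x, Periodic (g x) T) : Continuous fun x => ⨆ y, g x y := by
  have hrange : ∀ x, (⨆ y, g x y) = sSup (g x '' Set.uIcc 0 (0 + T)) := fun x => by
    rw [(hper x).image_uIcc hT 0, iSup]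
  simp only [hrange]
  exact isCompact_uIcc.continuous_sSup hg

section Homotopy

variable {E : Type*} [NormedAddCommGroup E] [NormedSpace ℝ E] {C : ℝ → ℝ → E}

theorem hasDerivAt_of_differentiable_uncurry
    (hC : Differentiable ℝ fun p : ℝ × ℝ => C p.1 p.2) (u v : ℝ) :
    HasDerivAt (C u) (fderiv ℝ (fun p : ℝ × ℝ => C p.1 p.2) (u, v) (0, 1)) v :=
  (hC (u, v)).hasFDerivAt.comp_hasDerivAt v ((hasDerivAt_const v u).prodMk (hasDerivAt_id v))

theorem continuous_deriv_of_contDiff_uncurry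
    (hC : ContDiff ℝ 1 fun p : ℝ × ℝ => C p.1 p.2) :
    Continuous fun p : ℝ × ℝ => deriv (C p.1) p.2 := by
  have hderiv : (fun p : ℝ × ℝ => deriv (C p.1) p.2) =
      fun p => fderiv ℝ (fun p : ℝ × ℝ => C p.1 p.2) p (0, 1) :=
    funext fun p =>
      (hasDerivAt_of_differentiable_uncurry (hC.differentiable one_ne_zero) p.1 p.2).deriv
  rw [hderiv]
  exact (hC.continuous_fderiv one_ne_zero).clm_apply continuous_const

theorem norm_sub_le_integral_iSup_norm_deriv [CompleteSpace E]
    (hC : ContDiff ℝ 1 fun p : ℝ × ℝ => C p.1 p.2) {T : ℝ} (hT : T ≠ 0)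
    (hper : ∀ v, Periodic (C · v) T) (u : ℝ) :
    ‖C u 1 - C u 0‖ ≤ ∫ v in (0 : ℝ)..1, ⨆ u', ‖deriv (C u') v‖ := by
  have hD : ∀ v, HasDerivAt (C u) (deriv (C u) v) v := fun v =>
    (hasDerivAt_of_differentiable_uncurry (hC.differentiable one_ne_zero) u v
      ).differentiableAt.hasDerivAt
  have hDcont := continuous_deriv_of_contDiff_uncurry hC
  have hDu : Continuous fun v => deriv (C u) v := hDcont.comp (.prodMk_right u)
  have hDper : ∀ v, Periodic (fun u' => ‖deriv (C u') v‖) T := fun v u' => by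
    simp only [show C (u' + T) = C u' from funext fun v' => hper v' u']
  have hbdd : ∀ v, BddAbove (Set.range fun u' => ‖deriv (C u') v‖) := fun v =>
    ((hDper v).compact_of_continuous hT (hDcont.comp (.prodMk_left v)).norm).bddAbove
  have hsup : Continuous fun v => ⨆ u', ‖deriv (C u') v‖ :=
    continuous_iSup_of_periodic (hDcont.comp continuous_swap).norm hT hDper
  calc ‖C u 1 - C u 0‖ = ‖∫ v in (0 : ℝ)..1, deriv (C u) v‖ := by
        rw [intervalIntegral.integral_eq_sub_of_hasDerivAt (fun v _ => hD v)
          (hDu.intervalIntegrable 0 1)]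
    _ ≤ ∫ v in (0 : ℝ)..1, ‖deriv (C u) v‖ :=
        intervalIntegral.norm_integral_le_integral_norm zero_le_one
    _ ≤ ∫ v in (0 : ℝ)..1, ⨆ u', ‖deriv (C u') v‖ :=
        intervalIntegral.integral_mono_on zero_le_one (hDu.norm.intervalIntegrable 0 1)
          (hsup.intervalIntegrable 0 1) fun v _ => le_ciSup (hbdd v) u

theorem integral_iSup_norm_deriv_add_smul_sub [CompleteSpace E] (a b : ℝ → E) :
    ∫ v in (0 : ℝ)..1, ⨆ u, ‖deriv (fun v' : ℝ => a u + v' • (b u - a u)) v‖ =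
      ⨆ u, ‖b u - a u‖ := by
  have hderiv : ∀ u v : ℝ, deriv (fun v' : ℝ => a u + v' • (b u - a u)) v = b u - a u :=
    fun u v => by simpa using (((hasDerivAt_id v).smul_const (b u - a u)).const_add (a u)).deriv
  simp only [hderiv, intervalIntegral.integral_const]
  simp

end Homotopy

theorem frechetDist_eq_dInfty_general
    (n : ℕ) (c₀ c₁ : ℝ → EuclideanSpace ℝ (Fin n))
    (hc₀ : ContDiff ℝ (⊤ : ℕ∞) c₀) (hc₁ : ContDiff ℝ (⊤ : ℕ∞) c₁)
    (hp₀ : ∀ u, c₀ (u + 2 * π) = c₀ u) (hp₁ : ∀ u, c₁ (u + 2 * π) = c₁ u) :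
    frechetDist n c₀ c₁ = dInfty n c₀ c₁ := by
  apply csInf_eq_csInf_of_forall_exists_le
  · rintro _ ⟨φ, hφ, rfl⟩
    refine ⟨_, ⟨fun u v => c₀ u + v • (c₁ (φ u) - c₀ u), φ, hφ, ?_, fun u v => ?_,
      fun u => by simp, fun u => by simp, (integral_iSup_norm_deriv_add_smul_sub _ _).symm⟩, le_rfl⟩
    · have h₀ : ContDiff ℝ (⊤ : ℕ∞) fun p : ℝ × ℝ => c₀ p.1 := hc₀.comp contDiff_fst
      have h₁ : ContDiff ℝ (⊤ : ℕ∞) fun p : ℝ × ℝ => c₁ (φ p.1) :=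
        hc₁.comp (hφ.1.comp contDiff_fst)
      exact h₀.add (contDiff_snd.smul (h₁.sub h₀))
    · simp only [hp₀ u, hφ.2.2.1 u, hp₁ (φ u)]
  · rintro _ ⟨C, φ, hφ, hC, hper, hC₀, hC₁, rfl⟩
    refine ⟨_, ⟨φ, hφ, rfl⟩, ciSup_le fun u => ?_⟩
    have hbound := norm_sub_le_integral_iSup_norm_deriv (hC.of_le (by exact_mod_cast le_top))
      Real.two_pi_pos.ne' (fun v u => hper u v) u
    rwa [hC₀, hC₁] at hbound

/-- The Fréchet distance coincides with the distance induced by the Finsler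
`L^∞` metric: `d_f = d_∞` (for smooth immersed closed curves, modeled as
2π-periodic maps `ℝ → ℝⁿ`). -/
theorem frechetDist_eq_dInfty
    (n : ℕ) (c₀ c₁ : ℝ → EuclideanSpace ℝ (Fin n))
    (hc₀ : ContDiff ℝ (⊤ : ℕ∞) c₀) (hc₁ : ContDiff ℝ (⊤ : ℕ∞) c₁)
    (hp₀ : ∀ u, c₀ (u + 2 * π) = c₀ u) (hp₁ : ∀ u, c₁ (u + 2 * π) = c₁ u)
    (him₀ : ∀ u, deriv c₀ u ≠ 0) (him₁ : ∀ u, deriv c₁ u ≠ 0) :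
    frechetDist n c₀ c₁ = dInfty n c₀ c₁ :=
  frechetDist_eq_dInfty_general n c₀ c₁ hc₀ hc₁ hp₀ hp₁
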